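/- With independent finite inputs X_1,...,X_M and output Y, a rate point r belongs to the front facet F_S if and only if its restriction r_{S^c} lies in the fundamental region of the channel with inputs X_{S^c} and output Y, and its restriction r_S lies in the dominant facet of the channel with inputs X_S and outputs (Y, X_{S^c}); i.e., r ∈ F_S iff (∀L ⊆ S^c: ∑_{i∈L} r_i ≤ I(X_L;Y|X_{S^c∖L})) and (∀L ⊆ S: ∑_{i∈L} r_i ≤ I(X_L;Y|X_{L^c}), with equality for L = S). -/

import Mathlib

open Finset

/-- Marginal joint pmf of `(X_S, Y)` obtained from the joint pmf `p` of
`(X_1,…,X_M, Y)` by summing out inputs outside `S`; evaluated at the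
values that `x` takes on `S` and at `y`. -/
noncomputable def margXY {M : ℕ} {α : Fin M → Type*} [∀ i, Fintype (α i)]
    [∀ i, DecidableEq (α i)] {β : Type*} [Fintype β]
    (p : (∀ i, α i) → β → ℝ) (S : Finset (Fin M)) (x : ∀ i, α i) (y : β) : ℝ :=
  ∑ x' : ∀ i, α i, if ∀ i ∈ S, x' i = x i then p x' y else 0

/-- Marginal pmf of `X_S`. -/
noncomputable def margX {M : ℕ} {α : Fin M → Type*} [∀ i, Fintype (α i)]
    [∀ i, DecidableEq (α i)] {β : Type*} [Fintype β]
    (p : (∀ i, α i) → β → ℝ) (S : Finset (Fin M)) (x : ∀ i, α i) : ℝ :=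
  ∑ y : β, margXY p S x y

/-- Conditional mutual information `I(X_S; Y | X_A)`, via the standard
sum formula. -/
noncomputable def condMI {M : ℕ} {α : Fin M → Type*} [∀ i, Fintype (α i)]
    [∀ i, DecidableEq (α i)] {β : Type*} [Fintype β]
    (p : (∀ i, α i) → β → ℝ) (S A : Finset (Fin M)) : ℝ :=
  ∑ x : ∀ i, α i, ∑ y : β,
    p x y * Real.log ((margXY p (S ∪ A) x y * margX p A x) /
      (margX p (S ∪ A) x * margXY p A x y))

/-- `p` is a probability mass function. -/
def IsProb {M : ℕ} {α : Fin M → Type*} [∀ i, Fintype (α i)]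
    [∀ i, DecidableEq (α i)] {β : Type*} [Fintype β]
    (p : (∀ i, α i) → β → ℝ) : Prop :=
  (∀ x y, 0 ≤ p x y) ∧ ∑ x : ∀ i, α i, ∑ y : β, p x y = 1

/-- The inputs `X_1, …, X_M` are mutually independent. -/
def IndepInputs {M : ℕ} {α : Fin M → Type*} [∀ i, Fintype (α i)]
    [∀ i, DecidableEq (α i)] {β : Type*} [Fintype β]
    (p : (∀ i, α i) → β → ℝ) : Prop :=
  ∀ x : ∀ i, α i, margX p Finset.univ x = ∏ i : Fin M, margX p {i} x

/-- Membership in the fundamental region `R`. -/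
def memR {M : ℕ} {α : Fin M → Type*} [∀ i, Fintype (α i)]
    [∀ i, DecidableEq (α i)] {β : Type*} [Fintype β]
    (p : (∀ i, α i) → β → ℝ) (r : Fin M → ℝ) : Prop :=
  (∀ i, 0 ≤ r i) ∧ ∀ S : Finset (Fin M), ∑ i ∈ S, r i ≤ condMI p S Sᶜ

/-- Membership in the front facet `F_S`. -/
def memF {M : ℕ} {α : Fin M → Type*} [∀ i, Fintype (α i)]
    [∀ i, DecidableEq (α i)] {β : Type*} [Fintype β]
    (p : (∀ i, α i) → β → ℝ) (S : Finset (Fin M)) (r : Fin M → ℝ) : Prop :=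
  memR p r ∧ ∑ i ∈ S, r i = condMI p S Sᶜ

/-- Membership in the back face `B_A`. -/
def memB {M : ℕ} {α : Fin M → Type*} [∀ i, Fintype (α i)]
    [∀ i, DecidableEq (α i)] {β : Type*} [Fintype β]
    (p : (∀ i, α i) → β → ℝ) (A : Finset (Fin M)) (r : Fin M → ℝ) : Prop :=
  memR p r ∧ ∀ i ∈ A, r i = 0

/-!
Forward direction: by the chain rule, `I(X_{S ∪ L}; Y | X_{(S ∪ L)ᶜ})` splits as
`I(X_L; Y | X_{Sᶜ \ L}) + I(X_S; Y | X_{Sᶜ})`, and the second summand equals `∑_{i ∈ S} r_i`.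

Converse: split `T = A ∪ B` with `A = T ∩ S`, `B = T \ S`. The chain rule gives
`I(X_T; Y | X_{Tᶜ}) = I(X_B; Y | X_{Tᶜ}) + I(X_A; Y | X_{Aᶜ})`, and
`I(X_B; Y | X_{Sᶜ \ B}) ≤ I(X_B; Y | X_{Tᶜ})`: conditioning additionally on inputs independent of
those already present cannot decrease the information. Indeed, by independence the difference
`I(X_B; Y | X_C) - I(X_B; Y | X_{C ∪ D})` is `E[log u]` for
`u = P(x_{C∪D}, y) P(x_{B∪C}, y) / (P(x_{B∪C∪D}, y) P(x_C, y))`, and `log u ≤ u - 1` together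
with `E[u] ≤ 1` (sum out `x_B`) makes it nonpositive.
-/

section

variable {M : ℕ} {α : Fin M → Type*} [∀ i, Fintype (α i)]

/-- Sums over partial assignments `x_T` are taken as sums over full tuples, each partial assignment
being counted `cylinderCard α T` times (the cardinality of its cylinder). -/
def cylinder (T : Finset (Fin M)) (x : ∀ i, α i) : Finset (∀ i, α i) :=
  Fintype.piFinset fun i => if i ∈ T then {x i} else univ

variable (α) in
def cylinderCard (T : Finset (Fin M)) : ℝ :=
  ∏ i ∈ Tᶜ, (Fintype.card (α i) : ℝ)

variable {T W : Finset (Fin M)} {x x' : ∀ i, α i}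

lemma mem_cylinder : x' ∈ cylinder T x ↔ ∀ i ∈ T, x' i = x i := by
  simp only [cylinder, Fintype.mem_piFinset]
  refine forall_congr' fun i => ?_
  split_ifs with hi <;> simp [hi]

lemma mem_cylinder_comm : x' ∈ cylinder T x ↔ x ∈ cylinder T x' := by
  simp only [mem_cylinder, eq_comm]

lemma mem_cylinder_self : x ∈ cylinder T x := mem_cylinder.2 fun _ _ => rfl

variable [∀ i, DecidableEq (α i)]

lemma card_cylinder_inter (x z : ∀ i, α i) :
    (#(cylinder W x ∩ cylinder T z) : ℝ) =
      if z ∈ cylinder (W ∩ T) x then cylinderCard α (W ∪ T) else 0 := by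
  rw [cylinder, cylinder, ← Fintype.piFinset_inter, Fintype.card_piFinset]
  split_ifs with hz
  · rw [cylinderCard, ← univ_inter (W ∪ T)ᶜ, ← prod_ite_mem, Nat.cast_prod]
    refine prod_congr rfl fun i _ => ?_
    have := mem_cylinder.1 hz i
    by_cases hW : i ∈ W <;> by_cases hT : i ∈ T <;> simp_all
  · obtain ⟨i, hi, hne⟩ : ∃ i ∈ W ∩ T, z i ≠ x i := by
      simpa only [mem_cylinder, not_forall, exists_prop] using hz
    rw [mem_inter] at hi
    refine Nat.cast_eq_zero.2 (prod_eq_zero (mem_univ i) ?_)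
    simp [hi.1, hi.2, Ne.symm hne]

lemma card_cylinder (x : ∀ i, α i) : (#(cylinder T x) : ℝ) = cylinderCard α T := by
  simpa [mem_cylinder_self] using card_cylinder_inter (W := T) (T := T) x x

lemma cylinderCard_pos (x : ∀ i, α i) : 0 < cylinderCard α T := by
  rw [← card_cylinder x]
  exact_mod_cast card_pos.2 ⟨x, mem_cylinder_self⟩

lemma sum_cylinder_of_forall_eq {g : (∀ i, α i) → ℝ}
    (hg : ∀ x' ∈ cylinder T x, g x' = g x) :
    ∑ x' ∈ cylinder T x, g x' = cylinderCard α T * g x := by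
  rw [sum_congr rfl hg, sum_const, nsmul_eq_mul, card_cylinder]

variable {β : Type*} [Fintype β] {p : (∀ i, α i) → β → ℝ} {U : Finset (Fin M)} {y : β}

variable (p) in
lemma margXY_eq_sum_cylinder (T : Finset (Fin M)) (x : ∀ i, α i) (y : β) :
    margXY p T x y = ∑ x' ∈ cylinder T x, p x' y := by
  rw [margXY, ← sum_filter]
  congr 1
  ext x'
  simp [mem_cylinder]

variable (p) in
lemma margX_eq_sum_cylinder (T : Finset (Fin M)) (x : ∀ i, α i) :
    margX p T x = ∑ x' ∈ cylinder T x, ∑ y, p x' y := by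
  simp only [margX, margXY_eq_sum_cylinder]
  exact sum_comm

variable (p) in
lemma margXY_univ (x : ∀ i, α i) (y : β) : margXY p univ x y = p x y := by
  have : cylinder univ x = {x} := by
    ext x'
    simp [mem_cylinder, funext_iff]
  rw [margXY_eq_sum_cylinder, this, sum_singleton]

variable (p) in
lemma margX_univ (x : ∀ i, α i) : margX p univ x = ∑ y, p x y := by
  simp only [margX, margXY_univ]

variable (p) in
lemma margXY_congr (h : x' ∈ cylinder T x) (y : β) : margXY p T x' y = margXY p T x y := by
  simp only [margXY_eq_sum_cylinder]
  congr 1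
  ext z
  simp only [mem_cylinder] at h ⊢
  exact forall₂_congr fun i hi => by rw [h i hi]

variable (p) in
lemma margX_congr (h : x' ∈ cylinder T x) : margX p T x' = margX p T x :=
  sum_congr rfl fun y _ => margXY_congr p h y

lemma margXY_nonneg (hp : IsProb p) (T : Finset (Fin M)) (x : ∀ i, α i) (y : β) :
    0 ≤ margXY p T x y := by
  rw [margXY_eq_sum_cylinder]
  exact sum_nonneg fun x' _ => hp.1 x' y

lemma le_margXY (hp : IsProb p) (T : Finset (Fin M)) (x : ∀ i, α i) (y : β) :
    p x y ≤ margXY p T x y := by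
  rw [margXY_eq_sum_cylinder]
  exact single_le_sum (fun x' _ => hp.1 x' y) mem_cylinder_self

lemma margXY_le_margX (hp : IsProb p) (T : Finset (Fin M)) (x : ∀ i, α i) (y : β) :
    margXY p T x y ≤ margX p T x :=
  single_le_sum (fun y' _ => margXY_nonneg hp T x y') (mem_univ y)

lemma margXY_anti (hp : IsProb p) (hTU : T ⊆ U) (x : ∀ i, α i) (y : β) :
    margXY p U x y ≤ margXY p T x y := by
  simp only [margXY_eq_sum_cylinder]
  refine sum_le_sum_of_subset_of_nonneg (fun x' hx' => ?_) fun x' _ _ => hp.1 x' y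
  rw [mem_cylinder] at hx' ⊢
  exact fun i hi => hx' i (hTU hi)

lemma margXY_pos (hp : IsProb p) (T : Finset (Fin M)) (h : 0 < p x y) :
    0 < margXY p T x y :=
  h.trans_le (le_margXY hp T x y)

lemma margX_pos (hp : IsProb p) (T : Finset (Fin M)) (h : 0 < p x y) : 0 < margX p T x :=
  (margXY_pos hp T h).trans_le (margXY_le_margX hp T x y)

lemma sum_margX_singleton_update (hp : IsProb p) (i : Fin M) (x : ∀ i, α i) :
    ∑ a, margX p {i} (Function.update x i a) = 1 := by
  have hcyl : ∀ a, cylinder {i} (Function.update x i a) =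
      univ.filter fun x' : ∀ i, α i => x' i = a :=
    fun a => by ext x'; simp [mem_cylinder]
  simp only [margX_eq_sum_cylinder, hcyl]
  rw [sum_fiberwise univ (fun x' : ∀ i, α i => x' i) fun x' => ∑ y, p x' y]
  exact hp.2

lemma margX_eq_prod (hp : IsProb p) (hind : IndepInputs p) (T : Finset (Fin M))
    (x : ∀ i, α i) : margX p T x = ∏ i ∈ T, margX p {i} x := by
  set P : ∀ i, α i → ℝ := fun i a => margX p {i} (Function.update x i a)
  have hP : ∀ x' : ∀ i, α i, ∑ y, p x' y = ∏ i, P i (x' i) := fun x' => by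
    rw [← margX_univ p x', hind]
    refine prod_congr rfl fun i _ => margX_congr p (mem_cylinder.2 fun j hj => ?_)
    rw [mem_singleton.1 hj, Function.update_self]
  calc margX p T x = ∑ x' ∈ cylinder T x, ∏ i, P i (x' i) := by
        rw [margX_eq_sum_cylinder]
        exact sum_congr rfl fun x' _ => hP x'
    _ = ∏ i, ∑ a ∈ if i ∈ T then {x i} else univ, P i a := (prod_univ_sum _ _).symm
    _ = ∏ i, if i ∈ T then margX p {i} x else 1 := by
        refine prod_congr rfl fun i _ => ?_
        split_ifs
        · simp [P]
        · exact sum_margX_singleton_update hp i x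
    _ = ∏ i ∈ T, margX p {i} x := by rw [prod_ite_mem, univ_inter]

lemma margX_union (hp : IsProb p) (hind : IndepInputs p) {T U : Finset (Fin M)}
    (h : Disjoint T U) (x : ∀ i, α i) : margX p (T ∪ U) x = margX p T x * margX p U x := by
  rw [margX_eq_prod hp hind, margX_eq_prod hp hind T, margX_eq_prod hp hind U, prod_union h]

variable (p) in
lemma sum_margXY_mul (T : Finset (Fin M)) (y : β) (g : (∀ i, α i) → ℝ) :
    ∑ x, margXY p T x y * g x = ∑ x, p x y * ∑ x' ∈ cylinder T x, g x' := by
  simp only [margXY_eq_sum_cylinder, sum_mul, mul_sum]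
  exact sum_comm' fun x x' => by simp [mem_cylinder_comm]

variable (p) in
lemma sum_margXY_mul_of_forall_eq {T : Finset (Fin M)} (y : β) {g : (∀ i, α i) → ℝ}
    (hg : ∀ x, ∀ x' ∈ cylinder T x, g x' = g x) :
    ∑ x, margXY p T x y * g x = cylinderCard α T * ∑ x, p x y * g x := by
  rw [sum_margXY_mul, mul_sum]
  refine sum_congr rfl fun x _ => ?_
  rw [sum_cylinder_of_forall_eq (hg x)]
  ring

variable (p) in
lemma sum_cylinder_margXY (W T : Finset (Fin M)) (x : ∀ i, α i) (y : β) :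
    ∑ x' ∈ cylinder W x, margXY p T x' y =
      cylinderCard α (W ∪ T) * margXY p (W ∩ T) x y := by
  simp only [margXY_eq_sum_cylinder]
  rw [sum_comm' (t' := univ) (s' := fun z => cylinder W x ∩ cylinder T z)
    fun x' z => by simp [mem_cylinder_comm (x := x') (x' := z)]]
  simp only [sum_const, nsmul_eq_mul, card_cylinder_inter, ite_mul, zero_mul, sum_ite_mem,
    univ_inter, mul_sum]

lemma log_condMI_summand (hp : IsProb p) (h : 0 < p x y) (S A : Finset (Fin M)) :
    Real.log (margXY p (S ∪ A) x y * margX p A x / (margX p (S ∪ A) x * margXY p A x y)) =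
      Real.log (margXY p (S ∪ A) x y) + Real.log (margX p A x) -
        Real.log (margX p (S ∪ A) x) - Real.log (margXY p A x y) := by
  have := margXY_pos hp (S ∪ A) h
  have := margXY_pos hp A h
  have := margX_pos hp (S ∪ A) h
  have := margX_pos hp A h
  rw [Real.log_div (by positivity) (by positivity), Real.log_mul (by positivity) (by positivity),
    Real.log_mul (by positivity) (by positivity)]
  ring

lemma condMI_union (hp : IsProb p) (S L A : Finset (Fin M)) :
    condMI p (S ∪ L) A = condMI p L A + condMI p S (L ∪ A) := by
  simp only [condMI, ← sum_add_distrib]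
  refine sum_congr rfl fun x _ => sum_congr rfl fun y _ => ?_
  rcases (hp.1 x y).eq_or_lt with h | h
  · simp [← h]
  · rw [log_condMI_summand hp h, log_condMI_summand hp h, log_condMI_summand hp h, union_assoc]
    ring

lemma sum_mul_margXY_ratio_le (hp : IsProb p) {B C D : Finset (Fin M)} (hBD : Disjoint B D)
    (y : β) :
    ∑ x, p x y * (margXY p (C ∪ D) x y * margXY p (B ∪ C) x y /
      (margXY p (B ∪ C ∪ D) x y * margXY p C x y)) ≤ ∑ x, p x y := by
  rcases isEmpty_or_nonempty (∀ i, α i) with hα | ⟨⟨x₀⟩⟩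
  · simp
  set E := B ∪ C ∪ D
  have hc : 0 < cylinderCard α E := cylinderCard_pos x₀
  have hE : C ∪ D ∪ (B ∪ C) = E := by grind
  have hC : (C ∪ D) ∩ (B ∪ C) = C := by grind [disjoint_left]
  have hloc : ∀ {T : Finset (Fin M)}, T ⊆ E → ∀ x, ∀ x' ∈ cylinder E x,
      margXY p T x' y = margXY p T x y := fun hT x x' h =>
    margXY_congr p (mem_cylinder.2 fun i hi => mem_cylinder.1 h i (hT hi)) y
  refine le_of_mul_le_mul_left ?_ hc
  calc cylinderCard α E * ∑ x, p x y * (margXY p (C ∪ D) x y * margXY p (B ∪ C) x y /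
        (margXY p E x y * margXY p C x y))
      = ∑ x, margXY p E x y * (margXY p (C ∪ D) x y * margXY p (B ∪ C) x y /
        (margXY p E x y * margXY p C x y)) := by
        refine (sum_margXY_mul_of_forall_eq p y fun x x' hx' => ?_).symm
        rw [hloc subset_rfl x x' hx', hloc (by grind) x x' hx', hloc (by grind) x x' hx',
          hloc (by grind) x x' hx']
    _ ≤ ∑ x, margXY p (C ∪ D) x y * (margXY p (B ∪ C) x y / margXY p C x y) := by
        refine sum_le_sum fun x _ => ?_
        rcases (margXY_nonneg hp E x y).eq_or_lt with h | h
        · rw [← h, zero_mul]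
          have := margXY_nonneg hp C x y
          have := margXY_nonneg hp (B ∪ C) x y
          have := margXY_nonneg hp (C ∪ D) x y
          positivity
        · have := h.trans_le (margXY_anti hp (show C ⊆ E by grind) x y)
          exact le_of_eq (by field_simp)
    _ = ∑ x, p x y * (cylinderCard α E * margXY p C x y / margXY p C x y) := by
        rw [sum_margXY_mul]
        refine sum_congr rfl fun x _ => ?_
        have hCx : ∀ x' ∈ cylinder (C ∪ D) x, margXY p C x' y = margXY p C x y := fun x' h =>
          margXY_congr p (mem_cylinder.2 fun i hi => mem_cylinder.1 h i (mem_union_left D hi)) y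
        rw [sum_congr rfl fun x' h => by rw [hCx x' h], ← sum_div, sum_cylinder_margXY, hE, hC]
    _ ≤ ∑ x, p x y * cylinderCard α E := by
        refine sum_le_sum fun x _ => mul_le_mul_of_nonneg_left ?_ (hp.1 x y)
        rw [mul_div_assoc]
        exact mul_le_of_le_one_right hc.le (div_self_le_one _)
    _ = cylinderCard α E * ∑ x, p x y := by rw [mul_sum]; simp only [mul_comm]

lemma condMI_sub_condMI_union (hp : IsProb p) (hind : IndepInputs p)
    {B C D : Finset (Fin M)} (hd : Disjoint (B ∪ C) D) :
    condMI p B C - condMI p B (C ∪ D) =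
      ∑ x, ∑ y, p x y * Real.log (margXY p (C ∪ D) x y * margXY p (B ∪ C) x y /
        (margXY p (B ∪ C ∪ D) x y * margXY p C x y)) := by
  simp only [condMI, ← sum_sub_distrib]
  refine sum_congr rfl fun x _ => sum_congr rfl fun y _ => ?_
  rcases (hp.1 x y).eq_or_lt with h | h
  · simp [← h]
  have hCD := margX_union hp hind (disjoint_union_left.1 hd).2 x
  have hE := margX_union hp hind hd x
  have := margXY_pos hp (C ∪ D) h
  have := margXY_pos hp (B ∪ C) h
  have := margXY_pos hp (B ∪ C ∪ D) h
  have := margXY_pos hp C h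
  have := margX_pos hp C h
  have := margX_pos hp D h
  have := margX_pos hp (B ∪ C) h
  rw [log_condMI_summand hp h, log_condMI_summand hp h, ← union_assoc, hCD, hE,
    Real.log_div (by positivity) (by positivity), Real.log_mul (by positivity) (by positivity),
    Real.log_mul (by positivity) (by positivity), Real.log_mul (by positivity) (by positivity),
    Real.log_mul (by positivity) (by positivity)]
  ring

lemma mul_log_le_mul_sub_one {w u : ℝ} (hw : 0 ≤ w) (hu : 0 < w → 0 < u) :
    w * Real.log u ≤ w * (u - 1) := by
  rcases hw.eq_or_lt with h | h
  · simp [← h]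
  · exact mul_le_mul_of_nonneg_left (Real.log_le_sub_one_of_pos (hu h)) hw

lemma condMI_le_condMI_union (hp : IsProb p) (hind : IndepInputs p)
    {B C D : Finset (Fin M)} (hd : Disjoint (B ∪ C) D) :
    condMI p B C ≤ condMI p B (C ∪ D) := by
  set u : (∀ i, α i) → β → ℝ := fun x y => margXY p (C ∪ D) x y * margXY p (B ∪ C) x y /
    (margXY p (B ∪ C ∪ D) x y * margXY p C x y)
  have hgibbs : ∑ x, ∑ y, p x y * Real.log (u x y) ≤ ∑ x, ∑ y, p x y * (u x y - 1) :=
    sum_le_sum fun x _ => sum_le_sum fun y _ => mul_log_le_mul_sub_one (hp.1 x y) fun h =>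
      div_pos (mul_pos (margXY_pos hp _ h) (margXY_pos hp _ h))
        (mul_pos (margXY_pos hp _ h) (margXY_pos hp _ h))
  have hbound : ∑ x, ∑ y, p x y * (u x y - 1) ≤ 0 := by
    simp only [mul_sub, mul_one, sum_sub_distrib]
    rw [sub_nonpos, sum_comm, sum_comm (f := p)]
    exact sum_le_sum fun y _ =>
      sum_mul_margXY_ratio_le hp (disjoint_union_left.1 hd).1 y
  linarith [condMI_sub_condMI_union hp hind hd]

variable {S : Finset (Fin M)} {r : Fin M → ℝ}

lemma sum_le_condMI_sdiff_of_memF (hp : IsProb p) (hF : memF p S r) {L : Finset (Fin M)}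
    (hL : L ⊆ Sᶜ) : ∑ i ∈ L, r i ≤ condMI p L (Sᶜ \ L) := by
  obtain ⟨⟨-, hR⟩, hS⟩ := hF
  have hchain := condMI_union hp S L (S ∪ L)ᶜ
  rw [show (S ∪ L)ᶜ = Sᶜ \ L by grind [mem_compl], union_sdiff_of_subset hL] at hchain
  have := hR (S ∪ L)
  rw [sum_union (disjoint_of_subset_right hL disjoint_compl_right),
    show (S ∪ L)ᶜ = Sᶜ \ L by grind [mem_compl], hchain] at this
  linarith

lemma memR_of_forall_sum_le (hp : IsProb p) (hind : IndepInputs p) (hr : ∀ i, 0 ≤ r i)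
    (hout : ∀ L ⊆ Sᶜ, ∑ i ∈ L, r i ≤ condMI p L (Sᶜ \ L))
    (hin : ∀ L ⊆ S, ∑ i ∈ L, r i ≤ condMI p L Lᶜ) : memR p r := by
  refine ⟨hr, fun T => ?_⟩
  have hmono : condMI p (T \ S) (Sᶜ \ (T \ S)) ≤ condMI p (T \ S) Tᶜ := by
    have := condMI_le_condMI_union hp hind (B := T \ S) (C := Sᶜ \ (T \ S)) (D := S \ (T ∩ S))
      (by grind [disjoint_left, mem_compl])
    rwa [show Sᶜ \ (T \ S) ∪ S \ (T ∩ S) = Tᶜ by grind [mem_compl]] at this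
  have hchain := condMI_union hp (T ∩ S) (T \ S) Tᶜ
  rw [show T ∩ S ∪ T \ S = T by grind, show T \ S ∪ Tᶜ = (T ∩ S)ᶜ by grind [mem_compl]]
    at hchain
  calc ∑ i ∈ T, r i = ∑ i ∈ T ∩ S, r i + ∑ i ∈ T \ S, r i := (sum_inter_add_sum_sdiff T S r).symm
    _ ≤ condMI p (T ∩ S) (T ∩ S)ᶜ + condMI p (T \ S) (Sᶜ \ (T \ S)) :=
      add_le_add (hin _ inter_subset_right) (hout _ fun i hi => by grind [mem_compl])
    _ ≤ condMI p T Tᶜ := by linarith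

end

/-- Product decomposition of a front facet: `r ∈ F_S` iff `r_{Sᶜ}` lies in the
fundamental region of the channel with inputs `X_{Sᶜ}` and `r_S` lies in the
dominant facet of the channel with inputs `X_S` and outputs `(Y, X_{Sᶜ})`. -/
theorem stmt14 {M : ℕ} {α : Fin M → Type*} [∀ i, Fintype (α i)]
    [∀ i, DecidableEq (α i)] {β : Type*} [Fintype β]
    (p : (∀ i, α i) → β → ℝ) (hp : IsProb p) (hind : IndepInputs p)
    (S : Finset (Fin M)) (r : Fin M → ℝ) (hr : ∀ i, 0 ≤ r i) :
    memF p S r ↔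
      ((∀ L ⊆ Sᶜ, ∑ i ∈ L, r i ≤ condMI p L (Sᶜ \ L)) ∧
       (∀ L ⊆ S, ∑ i ∈ L, r i ≤ condMI p L Lᶜ) ∧
       ∑ i ∈ S, r i = condMI p S Sᶜ) :=
  ⟨fun hF => ⟨fun _ hL => sum_le_condMI_sdiff_of_memF hp hF hL, fun L _ => hF.1.2 L, hF.2⟩,
    fun ⟨hout, hin, hS⟩ => ⟨memR_of_forall_sum_le hp hind hr hout hin, hS⟩⟩
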